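/- arXiv:2107.04783 — 4 statements merged into one kernel-verified Lean document; each statement's English description precedes it below -/
import Mathlib

section
/- Let Γ and Δ = {1,…,d} be finite sets, K ≤ Sym(Γ), L ≤ Sym(Δ), and let m ≥ 2 be an integer. Then (K↑L)^(m) = K^(m) ↑ L^[k], where k = min{k_m, d} and k_m is the number of orbits of K in its componentwise action on Γ^m. -/
open Equiv MulAction Pointwise

/-- The `m`-closure of a permutation group `G ≤ Sym(Ω)`: the largest subgroup of `Sym(Ω)`
having the same orbits as `G` in the induced componentwise action on `Ω^m`. -/
def mClosure {Ω : Type*} (m : ℕ) (G : Subgroup (Equiv.Perm Ω)) : Subgroup (Equiv.Perm Ω) :=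
  sSup {H : Subgroup (Equiv.Perm Ω) |
    ∀ α : Fin m → Ω, MulAction.orbit H α = MulAction.orbit G α}

/-- An ordered partition of `Ω` into at most `m` nonempty classes. -/
structure OrderedPartition (Ω : Type*) (m : ℕ) where
  classes : List (Set Ω)
  length_le : classes.length ≤ m
  nonempty : ∀ s ∈ classes, s.Nonempty
  pairwise_disjoint : classes.Pairwise Disjoint
  covers : ∀ x : Ω, ∃ s ∈ classes, x ∈ s

namespace OrderedPartition

variable {Ω : Type*} {m : ℕ}

theorem ext' {P Q : OrderedPartition Ω m} (h : P.classes = Q.classes) : P = Q := by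
  cases P; cases Q; simpa using h

/-- The natural action of a permutation on an ordered partition, classwise. -/
def act (f : Equiv.Perm Ω) (P : OrderedPartition Ω m) : OrderedPartition Ω m where
  classes := P.classes.map fun s => f '' s
  length_le := by simpa using P.length_le
  nonempty := by
    intro s hs
    obtain ⟨t, ht, rfl⟩ := List.mem_map.mp hs
    exact (P.nonempty t ht).image _
  pairwise_disjoint :=
    P.pairwise_disjoint.map _ fun s t h => (Set.disjoint_image_iff f.injective).mpr h
  covers := by
    intro x
    obtain ⟨s, hs, hx⟩ := P.covers (f⁻¹ x)
    exact ⟨f '' s, List.mem_map_of_mem hs, f⁻¹ x, hx, by simp⟩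

instance : SMul (Equiv.Perm Ω) (OrderedPartition Ω m) := ⟨act⟩

theorem smul_classes (f : Equiv.Perm Ω) (P : OrderedPartition Ω m) :
    (f • P).classes = P.classes.map fun s => f '' s := rfl

instance : MulAction (Equiv.Perm Ω) (OrderedPartition Ω m) where
  one_smul P := ext' (by simp [smul_classes])
  mul_smul f g P := ext' (by
    simp [smul_classes, List.map_map, Function.comp_def, Set.image_image])

end OrderedPartition

/-- The partition `m`-closure `G^[m]` of a permutation group `G ≤ Sym(Ω)`: the largest
subgroup of `Sym(Ω)` having the same orbits as `G` in its induced action on the set of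
ordered partitions of `Ω` into at most `m` nonempty classes. -/
def partClosure {Ω : Type*} (m : ℕ) (G : Subgroup (Equiv.Perm Ω)) : Subgroup (Equiv.Perm Ω) :=
  sSup {H : Subgroup (Equiv.Perm Ω) |
    ∀ P : OrderedPartition Ω m, MulAction.orbit H P = MulAction.orbit G P}

/-- The element `(g_1, …, g_d; ḡ)` of the wreath product in product action:
`(ω^g)_i = (ω_{i^{ḡ⁻¹}})^{g_{i^{ḡ⁻¹}}}`. -/
def wreathElem {Γ Δ : Type*} (gs : Δ → Equiv.Perm Γ) (σ : Equiv.Perm Δ) :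
    Equiv.Perm (Δ → Γ) where
  toFun ω i := gs (σ⁻¹ i) (ω (σ⁻¹ i))
  invFun ω i := (gs i)⁻¹ (ω (σ i))
  left_inv ω := by funext i; simp
  right_inv ω := by funext i; simp

theorem wreathElem_apply {Γ Δ : Type*} (gs : Δ → Equiv.Perm Γ) (σ : Equiv.Perm Δ)
    (ω : Δ → Γ) (i : Δ) : wreathElem gs σ ω i = gs (σ⁻¹ i) (ω (σ⁻¹ i)) := rfl

theorem wreathElem_one {Γ Δ : Type*} :
    wreathElem (fun _ : Δ => (1 : Equiv.Perm Γ)) 1 = 1 := by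
  refine Equiv.ext fun ω => funext fun i => ?_
  simp [wreathElem_apply]

theorem wreathElem_mul {Γ Δ : Type*} (gs hs : Δ → Equiv.Perm Γ) (σ τ : Equiv.Perm Δ) :
    wreathElem gs σ * wreathElem hs τ = wreathElem (fun j => gs (τ j) * hs j) (σ * τ) := by
  refine Equiv.ext fun ω => funext fun i => ?_
  simp [wreathElem_apply, Equiv.Perm.mul_apply, mul_inv_rev]

theorem wreathElem_inv {Γ Δ : Type*} (gs : Δ → Equiv.Perm Γ) (σ : Equiv.Perm Δ) :
    (wreathElem gs σ)⁻¹ = wreathElem (fun j => (gs (σ⁻¹ j))⁻¹) σ⁻¹ := by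
  rw [inv_eq_iff_mul_eq_one, wreathElem_mul]
  simpa using wreathElem_one

/-- The wreath product `K ↑ L` of `K ≤ Sym(Γ)` and `L ≤ Sym(Δ)` in product action,
as a subgroup of `Sym(Γ^Δ)`. -/
def wreathProduct {Γ Δ : Type*} (K : Subgroup (Equiv.Perm Γ)) (L : Subgroup (Equiv.Perm Δ)) :
    Subgroup (Equiv.Perm (Δ → Γ)) where
  carrier := {h | ∃ (gs : Δ → Equiv.Perm Γ) (σ : Equiv.Perm Δ),
    (∀ i, gs i ∈ K) ∧ σ ∈ L ∧ h = wreathElem gs σ}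
  one_mem' := ⟨fun _ => 1, 1, fun _ => K.one_mem, L.one_mem, wreathElem_one.symm⟩
  mul_mem' := by
    rintro f h ⟨gs, σ, hgs, hσ, rfl⟩ ⟨hs, τ, hhs, hτ, rfl⟩
    exact ⟨fun j => gs (τ j) * hs j, σ * τ, fun j => K.mul_mem (hgs _) (hhs _),
      L.mul_mem hσ hτ, wreathElem_mul gs hs σ τ⟩
  inv_mem' := by
    rintro f ⟨gs, σ, hgs, hσ, rfl⟩
    exact ⟨fun j => (gs (σ⁻¹ j))⁻¹, σ⁻¹, fun j => K.inv_mem (hgs _), L.inv_mem hσ,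
      wreathElem_inv gs σ⟩

/-- `k_m`: the number of orbits of `K ≤ Sym(Γ)` in its componentwise action on `Γ^m`. -/
noncomputable def numOrbits {Γ : Type*} (m : ℕ) (K : Subgroup (Equiv.Perm Γ)) : ℕ :=
  Nat.card (MulAction.orbitRel.Quotient K (Fin m → Γ))

/-- A permutation group `L ≤ Sym(Δ)` is primitive if it is transitive and preserves
no nontrivial partition of `Δ` (partitions being identified with equivalence relations). -/
def IsPrimitiveSubgroup {Δ : Type*} (L : Subgroup (Equiv.Perm Δ)) : Prop :=
  (∀ x y : Δ, ∃ g ∈ L, g x = y) ∧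
  ∀ r : Setoid Δ, (∀ g ∈ L, ∀ x y : Δ, r.r x y → r.r (g x) (g y)) → r = ⊥ ∨ r = ⊤

/-- The direct product `K × L ≤ Sym(Γ × Δ)` acting coordinatewise on `Γ × Δ`. -/
def prodSubgroup {Γ Δ : Type*} (K : Subgroup (Equiv.Perm Γ)) (L : Subgroup (Equiv.Perm Δ)) :
    Subgroup (Equiv.Perm (Γ × Δ)) where
  carrier := {h | ∃ k ∈ K, ∃ l ∈ L, h = Equiv.prodCongr k l}
  one_mem' := ⟨1, K.one_mem, 1, L.one_mem, Equiv.ext fun x => rfl⟩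
  mul_mem' := by
    rintro f h ⟨k₁, hk₁, l₁, hl₁, rfl⟩ ⟨k₂, hk₂, l₂, hl₂, rfl⟩
    exact ⟨k₁ * k₂, K.mul_mem hk₁ hk₂, l₁ * l₂, L.mul_mem hl₁ hl₂, Equiv.ext fun x => rfl⟩
  inv_mem' := by
    rintro f ⟨k, hk, l, hl, rfl⟩
    exact ⟨k⁻¹, K.inv_mem hk, l⁻¹, L.inv_mem hl, Equiv.ext fun x => rfl⟩

/-- Given an enumeration (via `sIdx`) of the orbits of `K` on `Γ^m` by `Fin a`,
and `α ∈ Ω^m` with `Ω = Γ^d` viewed as a `d × m` matrix with rows `α[i] = (j ↦ α j i)`,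
`piClasses sIdx α` is the ordered partition `Π(α)` of `Δ = Fin d` whose `ℓ`-th class
consists of the `i` whose row `α[i]` lies in the orbit with the `ℓ`-th smallest
occurring index. -/
def piClasses {Γ : Type*} {d m a : ℕ} (sIdx : (Fin m → Γ) → Fin a)
    (α : Fin m → (Fin d → Γ)) : List (Set (Fin d)) :=
  ((Finset.univ.image fun i : Fin d => sIdx fun j => α j i).sort (· ≤ ·)).map
    fun t => {i : Fin d | sIdx (fun j => α j i) = t}

/-!
An element `f` of `(K↑L)^(m)` agrees, on any two points of `Γ^d`, with an element of `K↑L`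
(this needs `m ≥ 2`), so it preserves Hamming distance. A Hamming isometry of `Γ^d` sends
the edges of the Hamming graph in direction `i` at a point to edges in a single direction;
comparing opposite sides of squares shows that this direction does not depend on the point,
so the isometry permutes coordinates and acts coordinatewise, i.e. `f = (f_1, …, f_d; τ)`.
Tuples with constant rows give `f_i ∈ K^(m)`. For the top group, colour each `i ∈ Δ` by the
`K`-orbit of the `i`-th row of a tuple `α ∈ Ω^m`: `f` maps `α` into its `K↑L`-orbit iff some
`σ ∈ L` recolours `Δ` as `τ` does. Colourings of `Δ` by the `k_m` orbits and ordered partitions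
of `Δ` into at most `min{k_m, d}` classes determine each other, which gives `τ ∈ L^[k]`, and
conversely.
-/

section OrbitClosure

variable {M X : Type*} [Group M] [MulAction M X]

def orbitClosure (X : Type*) [MulAction M X] (G : Subgroup M) : Subgroup M where
  carrier := {f | ∀ x : X, f • x ∈ orbit G x}
  one_mem' x := by rw [one_smul]; exact mem_orbit_self x
  mul_mem' {f h} hf hh x := by
    rw [mul_smul, ← orbit_eq_iff.mpr (hh x)]
    exact hf (h • x)
  inv_mem' {f} hf x := by
    have hx : f • f⁻¹ • x ∈ orbit G (f⁻¹ • x) := hf (f⁻¹ • x)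
    rw [smul_inv_smul] at hx
    exact mem_orbit_symm.mp hx

theorem mem_orbitClosure {G : Subgroup M} {f : M} :
    f ∈ orbitClosure X G ↔ ∀ x : X, f • x ∈ orbit G x := Iff.rfl

theorem sSup_orbit_eq_orbitClosure (G : Subgroup M) :
    sSup {H : Subgroup M | ∀ x : X, orbit H x = orbit G x} = orbitClosure X G := by
  refine le_antisymm (sSup_le fun H hH f hf x => ?_) (le_sSup fun x => ?_)
  · rw [← hH x]
    exact ⟨⟨f, hf⟩, rfl⟩
  · refine Set.Subset.antisymm ?_ fun y ⟨g, hg⟩ => ⟨⟨g, fun z => ⟨g, rfl⟩⟩, hg⟩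
    rintro y ⟨f, rfl⟩
    exact f.2 x

end OrbitClosure

theorem mem_mClosure_iff {Ω : Type*} {m : ℕ} {G : Subgroup (Perm Ω)} {f : Perm Ω} :
    f ∈ mClosure m G ↔ ∀ α : Fin m → Ω, f • α ∈ orbit G α := by
  rw [mClosure, sSup_orbit_eq_orbitClosure, mem_orbitClosure]

theorem mem_partClosure_iff {Ω : Type*} {m : ℕ} {G : Subgroup (Perm Ω)} {f : Perm Ω} :
    f ∈ partClosure m G ↔ ∀ P : OrderedPartition Ω m, f • P ∈ orbit G P := by
  rw [partClosure, sSup_orbit_eq_orbitClosure, mem_orbitClosure]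

theorem exists_mem_apply_eq_of_mem_mClosure {Ω : Type*} {m : ℕ} (hm : 2 ≤ m)
    {G : Subgroup (Perm Ω)} {f : Perm Ω} (hf : f ∈ mClosure m G) (x y : Ω) :
    ∃ g ∈ G, g x = f x ∧ g y = f y := by
  obtain ⟨g, hg⟩ := mem_mClosure_iff.mp hf fun j => if (j : ℕ) = 0 then x else y
  exact ⟨g, g.2, by simpa [Subgroup.smul_def] using congrFun hg ⟨0, by omega⟩,
    by simpa [Subgroup.smul_def] using congrFun hg ⟨1, by omega⟩⟩

section Hamming

variable {ι Γ : Type*} [Fintype ι] [DecidableEq Γ]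

def diffSet (x y : ι → Γ) : Finset ι := {i | x i ≠ y i}

@[simp]
theorem mem_diffSet {x y : ι → Γ} {i : ι} : i ∈ diffSet x y ↔ x i ≠ y i := by
  simp [diffSet]

theorem card_diffSet (x y : ι → Γ) : (diffSet x y).card = hammingDist x y := rfl

theorem diffSet_comm (x y : ι → Γ) : diffSet x y = diffSet y x := by
  ext i
  simp [ne_comm]

theorem diffSet_subset_union [DecidableEq ι] (x y z : ι → Γ) :
    diffSet x z ⊆ diffSet x y ∪ diffSet y z := by
  intro i
  simp only [Finset.mem_union, mem_diffSet]
  exact fun h => (h.ne_or_ne (y i)).imp_right Ne.symm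

theorem diffSet_update_right [DecidableEq ι] {x : ι → Γ} {i : ι} {a : Γ} (ha : a ≠ x i) :
    diffSet x (Function.update x i a) = {i} := by
  ext c
  by_cases hc : c = i
  · subst hc
    simpa using ha.symm
  · simp [hc]

theorem diffSet_eq_pair [DecidableEq ι] {p q r : ι → Γ} {j k : ι} (hq : diffSet p q = {j})
    (hr : diffSet p r = {k}) (hjk : j ≠ k) : diffSet q r = {j, k} := by
  have hq' : ∀ c, p c ≠ q c ↔ c = j := by simpa [Finset.ext_iff] using hq
  have hr' : ∀ c, p c ≠ r c ↔ c = k := by simpa [Finset.ext_iff] using hr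
  ext c
  simp only [mem_diffSet, Finset.mem_insert, Finset.mem_singleton]
  grind

theorem diffSet_eq_of_square [DecidableEq ι] {p q r s : ι → Γ} {j k : ι}
    (hq : diffSet p q = {j}) (hr : diffSet p r = {k}) (hjk : j ≠ k) (hps : hammingDist p s = 2)
    (hqs : hammingDist q s = 1) (hrs : hammingDist r s = 1) : diffSet r s = {j} := by
  rw [← card_diffSet] at hps hqs hrs
  obtain ⟨l, hl⟩ := Finset.card_eq_one.mp hrs
  obtain ⟨l', hl'⟩ := Finset.card_eq_one.mp hqs
  have hpair : ∀ {a b : ι} {t : ι → Γ}, diffSet p t = {a} → diffSet t s = {b} →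
      diffSet p s = {a, b} := fun {a b t} ht hts => by
    refine Finset.eq_of_subset_of_card_le ?_ (Finset.card_le_two.trans_eq hps.symm)
    rw [Finset.insert_eq, ← ht, ← hts]
    exact diffSet_subset_union p t s
  have hj : j ∈ ({k, l} : Finset ι) := by
    rw [← hpair hr hl, hpair hq hl']
    exact Finset.mem_insert_self _ _
  rw [Finset.mem_insert, Finset.mem_singleton, or_iff_right hjk] at hj
  rw [hl, hj]

end Hamming

theorem eq_of_forall_update_eq {ι Γ α : Type*} [Fintype ι] [DecidableEq ι] {P : (ι → Γ) → α}
    {s : Set ι} (hP : ∀ ω, ∀ c ∈ s, ∀ a, P (Function.update ω c a) = P ω) {ω ω' : ι → Γ}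
    (h : ∀ c ∉ s, ω c = ω' c) : P ω = P ω' := by
  classical
  suffices ∀ t : Finset ι, ↑t ⊆ s → ∀ ω, diffSet ω ω' ⊆ t → P ω = P ω' from
    this (diffSet ω ω') (fun c hc => not_not.mp fun hcs => mem_diffSet.mp hc (h c hcs)) ω
      subset_rfl
  intro t
  induction t using Finset.induction_on with
  | empty =>
    intro _ ω hω
    rw [Finset.subset_empty, ← Finset.card_eq_zero, card_diffSet, hammingDist_eq_zero] at hω
    rw [hω]
  | insert c t _ ih =>
    intro hts ω hω
    rw [← hP ω c (hts (Finset.mem_insert_self c t)) (ω' c)]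
    refine ih ((Finset.coe_subset.mpr (Finset.subset_insert c t)).trans hts) _ fun i hi => ?_
    have hic : i ≠ c := by rintro rfl; simp at hi
    rw [mem_diffSet, Function.update_of_ne hic] at hi
    exact (Finset.mem_insert.mp (hω (mem_diffSet.mpr hi))).resolve_left hic

section HammingIsometry

variable {ι Γ : Type*} [Fintype ι] [DecidableEq Γ] (g : Perm (ι → Γ))

theorem exists_eq_wreathElem_of_direction [DecidableEq ι] [Nonempty Γ] (τ : Perm ι)
    (hτ : ∀ ω i x, diffSet ω x = {i} → diffSet (g ω) (g x) = {τ i}) :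
    ∃ fs : ι → Perm Γ, g = wreathElem fs τ := by
  have hupdate : ∀ ω i c a, c ≠ i → g (Function.update ω c a) (τ i) = g ω (τ i) := by
    intro ω i c a hci
    by_cases ha : a = ω c
    · rw [ha, Function.update_eq_self]
    have hτi : τ i ∉ diffSet (g ω) (g (Function.update ω c a)) := by
      rw [hτ ω c _ (diffSet_update_right ha), Finset.mem_singleton, τ.injective.eq_iff]
      exact hci.symm
    rw [mem_diffSet, not_not] at hτi
    exact hτi.symm
  have hcoord : ∀ ω ω' i, ω i = ω' i → g ω (τ i) = g ω' (τ i) := fun ω ω' i h =>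
    eq_of_forall_update_eq (P := fun ω => g ω (τ i)) (s := {c | c ≠ i})
      (fun ω c hc a => hupdate ω i c a hc) fun c hc => not_not.mp hc ▸ h
  let ω₀ : ι → Γ := fun _ => Classical.arbitrary Γ
  let F : ι → Γ → Γ := fun i γ => g (Function.update ω₀ i γ) (τ i)
  have hF : ∀ ω i, g ω (τ i) = F i (ω i) := fun ω i => hcoord ω _ i (by simp)
  have hbij : ∀ i, Function.Bijective (F i) := by
    refine fun i => ⟨fun γ γ' hγ => not_not.mp fun hne => ?_, fun γ => ?_⟩
    · have h := hτ _ i _ (diffSet_update_right (x := Function.update ω₀ i γ) (a := γ')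
        (by simpa using Ne.symm hne))
      rw [Function.update_idem] at h
      exact mem_diffSet.mp (h ▸ Finset.mem_singleton_self (τ i)) hγ
    · exact ⟨(g⁻¹ fun _ => γ) i, by rw [← hF, Perm.coe_inv, Equiv.apply_symm_apply]⟩
  refine ⟨fun i => Equiv.ofBijective (F i) (hbij i), Equiv.ext fun ω => funext fun c => ?_⟩
  rw [wreathElem_apply, Equiv.ofBijective_apply, ← hF, Perm.coe_inv, Equiv.apply_symm_apply]

variable (hg : ∀ x y, hammingDist (g x) (g y) = hammingDist x y)
include hg

theorem exists_diffSet_eq_singleton_of_isometry [DecidableEq ι] (ω : ι → Γ) (i : ι) :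
    ∃ j, ∀ x, diffSet ω x = {i} → diffSet (g ω) (g x) = {j} := by
  by_cases hx : ∃ x, diffSet ω x = {i}
  · obtain ⟨x₀, hx₀⟩ := hx
    have hdist : ∀ {x}, diffSet ω x = {i} → (diffSet (g ω) (g x)).card = 1 := fun hx => by
      rw [card_diffSet, hg, ← card_diffSet, hx, Finset.card_singleton]
    obtain ⟨j, hj⟩ := Finset.card_eq_one.mp (hdist hx₀)
    refine ⟨j, fun x hx => ?_⟩
    obtain ⟨j', hj'⟩ := Finset.card_eq_one.mp (hdist hx)
    rw [hj']
    -- `x₀` and `x` are at distance at most 1, while image edges in two directions would put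
    -- `g x₀` and `g x` at distance 2.
    by_contra hne
    have hjj' : j ≠ j' := fun h => hne (by rw [h])
    have hle : hammingDist x₀ x ≤ 1 := by
      rw [← card_diffSet, ← Finset.card_singleton i]
      refine Finset.card_le_card ?_
      simpa [diffSet_comm x₀, hx, hx₀] using diffSet_subset_union x₀ ω x
    have h2 := congrArg Finset.card (diffSet_eq_pair hj hj' hjj')
    rw [card_diffSet, hg, Finset.card_pair hjj'] at h2
    omega
  · exact ⟨i, fun x hx' => absurd ⟨x, hx'⟩ hx⟩

section Direction

variable (D : (ι → Γ) → ι → ι)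
  (hD : ∀ ω i x, diffSet ω x = {i} → diffSet (g ω) (g x) = {D ω i})
include hD

theorem direction_injective [DecidableEq ι] [Nontrivial Γ] (ω : ι → Γ) :
    Function.Injective (D ω) := by
  intro i i' h
  by_contra hne
  obtain ⟨a, ha⟩ := exists_ne (ω i)
  obtain ⟨a', ha'⟩ := exists_ne (ω i')
  have hx := diffSet_update_right ha
  have hx' := diffSet_update_right ha'
  have h2 := congrArg Finset.card (diffSet_eq_pair hx hx' hne)
  rw [Finset.card_pair hne, card_diffSet, ← hg, ← card_diffSet] at h2
  have hsub : diffSet (g (Function.update ω i a)) (g (Function.update ω i' a')) ⊆ {D ω i} := by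
    simpa [diffSet_comm (g (Function.update ω i a)), hD _ _ _ hx, hD _ _ _ hx', h] using
      diffSet_subset_union (g (Function.update ω i a)) (g ω) (g (Function.update ω i' a'))
  have := Finset.card_le_card hsub
  rw [h2, Finset.card_singleton] at this
  omega

theorem direction_update [DecidableEq ι] [Nontrivial Γ] (ω : ι → Γ) (c : ι) (a : Γ) :
    D (Function.update ω c a) = D ω := by
  by_cases ha : a = ω c
  · rw [ha, Function.update_eq_self]
  set ω' := Function.update ω c a with hω'
  have hc : diffSet ω ω' = {c} := diffSet_update_right ha
  have hdist : ∀ {x y : ι → Γ} {k : Finset ι}, diffSet x y = k →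
      hammingDist (g x) (g y) = k.card := by
    rintro x y k rfl
    rw [hg, card_diffSet]
  funext i
  by_cases hic : i = c
  · subst hic
    have h := hD ω' i ω (by rwa [diffSet_comm])
    rw [diffSet_comm, hD ω i ω' hc] at h
    exact (Finset.singleton_injective h).symm
  -- `ω`, `ω[i ↦ b]`, `ω' = ω[c ↦ a]`, `ω'[i ↦ b]` span a square; so does its image, and
  -- there the sides `ω'–ω'[i ↦ b]` and `ω–ω[i ↦ b]` have the same direction.
  obtain ⟨b, hb⟩ := exists_ne (ω i)
  have hx : diffSet ω (Function.update ω i b) = {i} := diffSet_update_right hb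
  have hx' : diffSet ω' (Function.update ω' i b) = {i} :=
    diffSet_update_right (by rwa [hω', Function.update_of_ne hic])
  have hxx' : diffSet (Function.update ω i b) (Function.update ω' i b) = {c} := by
    rw [Function.update_comm (Ne.symm hic)]
    exact diffSet_update_right (by rwa [Function.update_of_ne (Ne.symm hic)])
  have hωx' : diffSet ω (Function.update ω' i b) = {i, c} :=
    diffSet_eq_pair (by rw [diffSet_comm]; exact hx) hxx' hic
  have hsq := diffSet_eq_of_square (hD ω i _ hx) (hD ω c ω' hc)
    ((direction_injective g hg D hD ω).ne hic) (by rw [hdist hωx', Finset.card_pair hic])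
    (hdist hxx') (hdist hx')
  rw [hD ω' i _ hx'] at hsq
  exact Finset.singleton_injective hsq

end Direction

theorem exists_eq_wreathElem_of_isometry [DecidableEq ι] :
    ∃ (fs : ι → Perm Γ) (σ : Perm ι), g = wreathElem fs σ := by
  rcases subsingleton_or_nontrivial Γ with hΓ | hΓ
  · exact ⟨1, 1, Equiv.ext fun _ => Subsingleton.elim _ _⟩
  choose D hD using exists_diffSet_eq_singleton_of_isometry g hg
  let ω₀ : ι → Γ := fun _ => Classical.arbitrary Γ
  have hconst : ∀ ω, D ω = D ω₀ := fun ω =>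
    eq_of_forall_update_eq (s := Set.univ)
      (fun ω c _ a => direction_update g hg D hD ω c a) (by simp)
  let τ := Equiv.ofBijective (D ω₀)
    (Finite.injective_iff_bijective.mp (direction_injective g hg D hD ω₀))
  obtain ⟨fs, hfs⟩ := exists_eq_wreathElem_of_direction g τ fun ω i x hx => by
    rw [hD ω i x hx, hconst]
    rfl
  exact ⟨fs, τ, hfs⟩

end HammingIsometry

section WreathProduct

variable {Γ Δ : Type*} {m : ℕ} {K : Subgroup (Perm Γ)} {L : Subgroup (Perm Δ)}

theorem swap_wreathElem_smul (gs : Δ → Perm Γ) (σ : Perm Δ) (α : Fin m → Δ → Γ) (i : Δ) :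
    Function.swap (wreathElem gs σ • α) i = gs (σ⁻¹ i) • Function.swap α (σ⁻¹ i) := rfl

theorem hammingDist_wreathElem [Fintype Δ] [DecidableEq Γ] (gs : Δ → Perm Γ) (σ : Perm Δ)
    (x y : Δ → Γ) : hammingDist (wreathElem gs σ x) (wreathElem gs σ y) = hammingDist x y := by
  have h : diffSet (wreathElem gs σ x) (wreathElem gs σ y) =
      (diffSet x y).map σ.toEmbedding := by
    ext c
    simp [wreathElem_apply, Finset.mem_map_equiv]
  rw [← card_diffSet, h, Finset.card_map, card_diffSet]

theorem mem_orbit_wreathProduct_iff {α β : Fin m → Δ → Γ} :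
    β ∈ orbit (wreathProduct K L) α ↔
      ∃ σ ∈ L, ∀ i, Function.swap β i ∈ orbit K (Function.swap α (σ⁻¹ i)) := by
  constructor
  · rintro ⟨⟨_, gs, σ, hgs, hσ, rfl⟩, rfl⟩
    exact ⟨σ, hσ, fun i => ⟨⟨gs (σ⁻¹ i), hgs _⟩, rfl⟩⟩
  · rintro ⟨σ, hσ, h⟩
    choose k hk using h
    refine ⟨⟨wreathElem (fun i => k (σ i)) σ, _, σ, fun i => (k _).2, hσ, rfl⟩, ?_⟩
    funext j i
    simpa [Subgroup.smul_def, wreathElem_apply] using congrFun (hk i) j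

theorem hammingDist_apply_of_mem_mClosure [Fintype Δ] [DecidableEq Γ] (hm : 2 ≤ m)
    {f : Perm (Δ → Γ)} (hf : f ∈ mClosure m (wreathProduct K L)) (x y : Δ → Γ) :
    hammingDist (f x) (f y) = hammingDist x y := by
  obtain ⟨_, ⟨gs, σ, -, -, rfl⟩, hx, hy⟩ := exists_mem_apply_eq_of_mem_mClosure hm hf x y
  rw [← hx, ← hy, hammingDist_wreathElem]

theorem mem_mClosure_of_wreathElem_mem_mClosure {fs : Δ → Perm Γ} {τ : Perm Δ}
    (hf : wreathElem fs τ ∈ mClosure m (wreathProduct K L)) (i : Δ) : fs i ∈ mClosure m K := by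
  refine mem_mClosure_iff.mpr fun ρ => ?_
  obtain ⟨σ, -, h⟩ := mem_orbit_wreathProduct_iff.mp (mem_mClosure_iff.mp hf fun j _ => ρ j)
  simpa [swap_wreathElem_smul] using h (τ i)

theorem wreathElem_mem_mClosure_iff {fs : Δ → Perm Γ} {τ : Perm Δ}
    (hfs : ∀ i, fs i ∈ mClosure m K) :
    wreathElem fs τ ∈ mClosure m (wreathProduct K L) ↔
      ∀ α : Fin m → Δ → Γ, ∃ σ ∈ L,
        ∀ i, orbit K (Function.swap α (τ⁻¹ i)) = orbit K (Function.swap α (σ⁻¹ i)) := by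
  have horbit : ∀ i (ρ : Fin m → Γ), orbit K (fs i • ρ) = orbit K ρ := fun i ρ =>
    orbit_eq_iff.mpr (mem_mClosure_iff.mp (hfs i) ρ)
  simp_rw [mem_mClosure_iff, mem_orbit_wreathProduct_iff, swap_wreathElem_smul, ← orbit_eq_iff,
    horbit]

end WreathProduct

namespace OrderedPartition

variable {Ω : Type*} {n : ℕ}

def SameClass (P : OrderedPartition Ω n) (a b : Ω) : Prop :=
  ∀ s ∈ P.classes, a ∈ s ↔ b ∈ s

theorem smul_eq_smul_iff {P : OrderedPartition Ω n} {σ τ : Perm Ω} :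
    σ • P = τ • P ↔ ∀ x, P.SameClass (σ⁻¹ x) (τ⁻¹ x) := by
  simp_rw [SameClass]
  refine ⟨fun h x s hs => ?_, fun h => ext' (List.map_inj_left.mpr fun s hs => ?_)⟩
  · have hs' := List.map_inj_left.mp (congrArg classes h) s hs
    simpa [Set.mem_image_equiv] using Set.ext_iff.mp hs' x
  · ext x
    simpa [Set.mem_image_equiv] using h x s hs

theorem exists_coloring {Q : Type*} [Finite Q] (P : OrderedPartition Ω n)
    (hP : P.classes.length ≤ Nat.card Q) : ∃ ℓ : Ω → Q, ∀ a b, P.SameClass a b ↔ ℓ a = ℓ b := by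
  have hcover : ∀ a, ∃ t, a ∈ P.classes.get t := fun a => by
    obtain ⟨s, hs, ha⟩ := P.covers a
    obtain ⟨t, rfl⟩ := List.mem_iff_get.mp hs
    exact ⟨t, ha⟩
  choose idx hidx using hcover
  have hmem : ∀ a t, a ∈ P.classes.get t ↔ t = idx a := fun a t => by
    refine ⟨fun ha => not_not.mp fun hne => ?_, fun ht => ht ▸ hidx a⟩
    have hdisj := List.pairwise_iff_get.mp P.pairwise_disjoint
    rcases lt_or_gt_of_ne hne with hlt | hlt
    · exact Set.disjoint_left.mp (hdisj _ _ hlt) ha (hidx a)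
    · exact Set.disjoint_left.mp (hdisj _ _ hlt) (hidx a) ha
  have : Fintype Q := Fintype.ofFinite Q
  obtain ⟨e⟩ : Nonempty (Fin P.classes.length ↪ Q) :=
    Function.Embedding.nonempty_of_card_le (by simpa [Nat.card_eq_fintype_card] using hP)
  refine ⟨fun a => e (idx a), fun a b => ?_⟩
  rw [e.injective.eq_iff]
  constructor
  · intro h
    exact (hmem b _).mp ((h _ (List.get_mem _ _)).mp (hidx a))
  · rintro h _ hs
    obtain ⟨t, rfl⟩ := List.mem_iff_get.mp hs
    rw [hmem, hmem, h]

theorem exists_of_coloring {Q : Type*} [Fintype Ω] [Finite Q] (ℓ : Ω → Q) :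
    ∃ P : OrderedPartition Ω (min (Nat.card Q) (Nat.card Ω)),
      ∀ a b, P.SameClass a b ↔ ℓ a = ℓ b := by
  classical
  refine ⟨⟨(Finset.univ.image ℓ).toList.map fun q => ℓ ⁻¹' {q}, ?_, ?_, ?_, ?_⟩, fun a b => ?_⟩
  · have : Fintype Q := Fintype.ofFinite Q
    rw [List.length_map, Finset.length_toList, Nat.card_eq_fintype_card (α := Ω),
      Nat.card_eq_fintype_card]
    exact le_min (Finset.card_le_univ _) Finset.card_image_le
  · simp only [List.mem_map, Finset.mem_toList, Finset.mem_image]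
    rintro _ ⟨_, ⟨a, -, rfl⟩, rfl⟩
    exact ⟨a, rfl⟩
  · exact List.Pairwise.map _ (fun q q' hne => (Set.disjoint_singleton.mpr hne).preimage ℓ)
      (Finset.nodup_toList _)
  · intro a
    exact ⟨ℓ ⁻¹' {ℓ a}, by simp, rfl⟩
  · simp only [SameClass, List.mem_map, Finset.mem_toList, Finset.mem_image]
    constructor
    · intro h
      exact ((h _ ⟨ℓ a, ⟨a, Finset.mem_univ a, rfl⟩, rfl⟩).mp rfl).symm
    · rintro h _ ⟨q, -, rfl⟩
      simp [h]

end OrderedPartition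

theorem mem_partClosure_iff_forall_coloring {Δ Q : Type*} [Fintype Δ] [Finite Q]
    {L : Subgroup (Perm Δ)} {τ : Perm Δ} :
    τ ∈ partClosure (min (Nat.card Q) (Nat.card Δ)) L ↔
      ∀ ℓ : Δ → Q, ∃ σ ∈ L, ∀ x, ℓ (τ⁻¹ x) = ℓ (σ⁻¹ x) := by
  rw [mem_partClosure_iff]
  constructor
  · intro h ℓ
    obtain ⟨P, hP⟩ := OrderedPartition.exists_of_coloring ℓ
    obtain ⟨⟨σ, hσ⟩, hστ⟩ := h P
    exact ⟨σ, hσ, fun x => ((hP _ _).mp (OrderedPartition.smul_eq_smul_iff.mp hστ x)).symm⟩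
  · intro h P
    obtain ⟨ℓ, hℓ⟩ := P.exists_coloring (P.length_le.trans (min_le_left _ _))
    obtain ⟨σ, hσ, hστ⟩ := h ℓ
    exact ⟨⟨σ, hσ⟩, OrderedPartition.smul_eq_smul_iff.mpr fun x => (hℓ _ _).mpr (hστ x).symm⟩

theorem mem_partClosure_iff_forall_orbit_eq {Γ Δ : Type*} [Finite Γ] [Fintype Δ] {m : ℕ}
    {K : Subgroup (Perm Γ)} {L : Subgroup (Perm Δ)} {τ : Perm Δ} :
    τ ∈ partClosure (min (numOrbits m K) (Nat.card Δ)) L ↔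
      ∀ α : Fin m → Δ → Γ, ∃ σ ∈ L,
        ∀ i, orbit K (Function.swap α (τ⁻¹ i)) = orbit K (Function.swap α (σ⁻¹ i)) := by
  have hmk : ∀ ρ ρ' : Fin m → Γ, orbit K ρ = orbit K ρ' ↔
      (Quotient.mk'' ρ : orbitRel.Quotient K (Fin m → Γ)) = Quotient.mk'' ρ' := fun ρ ρ' => by
    rw [Quotient.eq'', orbitRel_apply, orbit_eq_iff]
  rw [numOrbits, mem_partClosure_iff_forall_coloring]
  constructor
  · intro h α
    obtain ⟨σ, hσ, hℓ⟩ := h fun i => Quotient.mk'' (Function.swap α i)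
    exact ⟨σ, hσ, fun i => (hmk _ _).mpr (hℓ i)⟩
  · intro h ℓ
    obtain ⟨σ, hσ, hα⟩ := h fun j i => (ℓ i).out j
    exact ⟨σ, hσ, fun i =>
      (Quotient.out_eq' _).symm.trans (((hmk _ _).mp (hα i)).trans (Quotient.out_eq' _))⟩

/-- **Theorem 1 (main theorem).** For `K ≤ Sym(Γ)`, `L ≤ Sym(Δ)` with `Δ = {1,…,d}` and
`m ≥ 2`: `(K↑L)^(m) = K^(m) ↑ L^[k]` where `k = min{k_m, d}` and `k_m = |orb_m(K)|`. -/
theorem mClosure_wreathProduct {Γ : Type*} [Fintype Γ] {d : ℕ}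
    (K : Subgroup (Equiv.Perm Γ)) (L : Subgroup (Equiv.Perm (Fin d)))
    (m : ℕ) (hm : 2 ≤ m) :
    mClosure m (wreathProduct K L) =
      wreathProduct (mClosure m K) (partClosure (min (numOrbits m K) d) L) := by
  classical
  ext f
  constructor
  · intro hf
    obtain ⟨fs, τ, rfl⟩ :=
      exists_eq_wreathElem_of_isometry f (hammingDist_apply_of_mem_mClosure hm hf)
    have hfs := mem_mClosure_of_wreathElem_mem_mClosure hf
    have hτ := mem_partClosure_iff_forall_orbit_eq.mpr ((wreathElem_mem_mClosure_iff hfs).mp hf)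
    rw [Nat.card_fin] at hτ
    exact ⟨fs, τ, hfs, hτ, rfl⟩
  · rintro ⟨fs, τ, hfs, hτ, rfl⟩
    refine (wreathElem_mem_mClosure_iff hfs).mpr (mem_partClosure_iff_forall_orbit_eq.mp ?_)
    rwa [Nat.card_fin]
end

section
/- Let Ω be a finite set, G ≤ Sym(Ω), and m a natural number. Then G^[m+1] ≤ G^(m). -/
open Equiv MulAction Pointwise

/-!
`G^[m+1]` is generated by subgroups `H` with the same orbits as `G` on ordered partitions into
at most `m + 1` classes. Given `α ∈ Ω^m`, take the partition whose classes are the singletons of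
the entries of `α` followed by the rest of `Ω`: if `f ∈ H` maps it where `g ∈ G` does, then `f`
agrees with `g` on every singleton class, hence on the entries of `α`. So `H` lies in the group
of permutations agreeing on each `m`-tuple with an element of `G`, which has the same orbits as
`G` on `Ω^m`.
-/

def pointwiseClosure {Ω : Type*} (m : ℕ) (G : Subgroup (Equiv.Perm Ω)) :
    Subgroup (Equiv.Perm Ω) where
  carrier := {f | ∀ α : Fin m → Ω, ∃ g ∈ G, ∀ j, f (α j) = g (α j)}
  one_mem' := fun _ => ⟨1, G.one_mem, fun _ => rfl⟩
  mul_mem' := by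
    rintro f₁ f₂ h₁ h₂ α
    obtain ⟨g₂, hg₂, he₂⟩ := h₂ α
    obtain ⟨g₁, hg₁, he₁⟩ := h₁ fun j => g₂ (α j)
    exact ⟨g₁ * g₂, G.mul_mem hg₁ hg₂, fun j => by simp only [Perm.mul_apply, he₂ j, he₁ j]⟩
  inv_mem' := by
    intro f hf α
    obtain ⟨g, hg, he⟩ := hf fun j => f⁻¹ (α j)
    refine ⟨g⁻¹, G.inv_mem hg, fun j => ?_⟩
    rw [Perm.eq_inv_iff_eq]
    simpa using (he j).symm

theorem le_pointwiseClosure {Ω : Type*} (m : ℕ) (G : Subgroup (Equiv.Perm Ω)) :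
    G ≤ pointwiseClosure m G :=
  fun g hg _ => ⟨g, hg, fun _ => rfl⟩

theorem orbit_pointwiseClosure {Ω : Type*} (m : ℕ) (G : Subgroup (Equiv.Perm Ω))
    (α : Fin m → Ω) : orbit (pointwiseClosure m G) α = orbit G α := by
  refine Set.Subset.antisymm ?_ fun β ⟨⟨g, hg⟩, hβ⟩ => ⟨⟨g, le_pointwiseClosure m G hg⟩, hβ⟩
  rintro _ ⟨⟨f, hf⟩, rfl⟩
  obtain ⟨g, hg, he⟩ := hf α
  exact ⟨⟨g, hg⟩, funext fun j => (he j).symm⟩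

theorem pointwiseClosure_le_mClosure {Ω : Type*} (m : ℕ) (G : Subgroup (Equiv.Perm Ω)) :
    pointwiseClosure m G ≤ mClosure m G :=
  le_sSup (orbit_pointwiseClosure m G)

namespace OrderedPartition

variable {Ω : Type*} {m : ℕ}

theorem apply_eq_of_smul_eq_smul {f g : Equiv.Perm Ω} {P : OrderedPartition Ω m} {x : Ω}
    (h : f • P = g • P) (hx : {x} ∈ P.classes) : f x = g x := by
  have hcls := congrArg classes h
  rw [smul_classes, smul_classes] at hcls
  simpa [Set.image_singleton] using List.map_eq_map_iff.mp hcls _ hx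

open Classical in
noncomputable def ofSingletons (L : List Ω) (hL : L.Nodup) (hlen : L.length ≤ m) :
    OrderedPartition Ω (m + 1) where
  classes := L.map (fun x => {x}) ++ if {x | x ∉ L}.Nonempty then [{x | x ∉ L}] else []
  length_le := by
    have : (if {x | x ∉ L}.Nonempty then [{x | x ∉ L}] else []).length ≤ 1 := by
      split <;> simp
    simp only [List.length_append, List.length_map]
    omega
  nonempty := by
    intro s hs
    rcases List.mem_append.mp hs with hs | hs
    · obtain ⟨x, -, rfl⟩ := List.mem_map.mp hs
      exact Set.singleton_nonempty x
    · split at hs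
      · rwa [List.mem_singleton.mp hs]
      · simp at hs
  pairwise_disjoint := by
    refine List.pairwise_append.mpr
      ⟨List.Pairwise.map _ (fun x y hxy => Set.disjoint_singleton.mpr hxy) hL,
      by split <;> simp, ?_⟩
    intro s hs t ht
    obtain ⟨x, hx, rfl⟩ := List.mem_map.mp hs
    split at ht
    · rw [List.mem_singleton.mp ht]
      exact Set.disjoint_singleton_left.mpr (not_not.mpr hx)
    · simp at ht
  covers := by
    intro x
    by_cases hx : x ∈ L
    · exact ⟨{x}, List.mem_append_left _ (List.mem_map_of_mem hx), rfl⟩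
    · refine ⟨{x | x ∉ L}, List.mem_append_right _ ?_, hx⟩
      rw [if_pos ⟨x, hx⟩]
      exact List.mem_singleton_self _

theorem singleton_mem_ofSingletons {L : List Ω} (hL : L.Nodup) (hlen : L.length ≤ m) {x : Ω}
    (hx : x ∈ L) : {x} ∈ (ofSingletons L hL hlen).classes :=
  List.mem_append_left _ (List.mem_map_of_mem hx)

end OrderedPartition

theorem le_pointwiseClosure_of_orbit_eq {Ω : Type*} {m : ℕ} {G H : Subgroup (Equiv.Perm Ω)}
    (hH : ∀ P : OrderedPartition Ω (m + 1), orbit H P = orbit G P) :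
    H ≤ pointwiseClosure m G := by
  classical
  intro f hf α
  have hL : (List.ofFn α).dedup.length ≤ m := by
    simpa using (List.dedup_sublist (List.ofFn α)).length_le
  let P := OrderedPartition.ofSingletons _ (List.nodup_dedup (List.ofFn α)) hL
  obtain ⟨⟨g, hg⟩, hgP⟩ : f • P ∈ orbit G P := hH P ▸ ⟨⟨f, hf⟩, rfl⟩
  refine ⟨g, hg, fun j => (OrderedPartition.apply_eq_of_smul_eq_smul hgP ?_).symm⟩
  exact OrderedPartition.singleton_mem_ofSingletons _ _ (by simp)

theorem partClosure_le_mClosure_general {Ω : Type*} (G : Subgroup (Equiv.Perm Ω))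
    (m : ℕ) :
    partClosure (m + 1) G ≤ mClosure m G :=
  (sSup_le fun _ hH => le_pointwiseClosure_of_orbit_eq hH).trans
    (pointwiseClosure_le_mClosure m G)

/-- **Lemma.** `G^[m+1] ≤ G^(m)`. -/
theorem partClosure_le_mClosure {Ω : Type*} [Fintype Ω] (G : Subgroup (Equiv.Perm Ω))
    (m : ℕ) :
    partClosure (m + 1) G ≤ mClosure m G :=
  partClosure_le_mClosure_general G m
end

section
/- Let n ≥ 3 and let G = Alt(n) in its standard action on Ω = {1,…,n}. Then for every natural number m, G^[m] = Sym(n) if m ≤ n − 1, and G^[m] = G if m ≥ n. -/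
open Equiv MulAction Pointwise

/-!
If `m < n`, every ordered partition into at most `m` classes has a class containing two points
`x ≠ y`, and the transposition `(x y)` fixes it; so an odd `σ` moves the partition exactly as the
even permutation `σ (x y)` does, and `Alt(n)` and `Sym(n)` have the same orbits. If `m ≥ n`, the
partition into singletons has trivial stabiliser in `Sym(n)`, so a group with the same orbit on it
as `G` is contained in `G`.
-/

theorem orbit_alternatingGroup_eq_orbit_top {Ω α : Type*} [Fintype Ω] [DecidableEq Ω]
    [MulAction (Perm Ω) α] {a : α} {x y : Ω} (hxy : x ≠ y) (h : swap x y • a = a) :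
    orbit (alternatingGroup Ω) a = orbit (⊤ : Subgroup (Perm Ω)) a := by
  refine subset_antisymm (fun _ ⟨σ, hσa⟩ => ⟨⟨σ, trivial⟩, hσa⟩) ?_
  rintro _ ⟨⟨σ, -⟩, rfl⟩
  rcases Int.units_eq_one_or (Perm.sign σ) with hσ | hσ
  · exact ⟨⟨σ, hσ⟩, rfl⟩
  refine ⟨⟨σ * swap x y, ?_⟩, ?_⟩
  · simp [Perm.mem_alternatingGroup, hσ, Perm.sign_swap hxy]
  · change (σ * swap x y) • a = σ • a
    rw [mul_smul, h]

namespace OrderedPartition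

variable {Ω : Type*} {m : ℕ}

theorem exists_ne_mem_of_length_lt_card [Fintype Ω] (P : OrderedPartition Ω m)
    (h : P.classes.length < Fintype.card Ω) :
    ∃ s ∈ P.classes, ∃ x ∈ s, ∃ y ∈ s, x ≠ y := by
  have hcover (x : Ω) : ∃ i : Fin P.classes.length, x ∈ P.classes[i] := by
    obtain ⟨s, hs, hx⟩ := P.covers x
    obtain ⟨i, rfl⟩ := List.get_of_mem hs
    exact ⟨i, hx⟩
  choose classIdx hclassIdx using hcover
  obtain ⟨x, y, hxy, hidx⟩ :=
    Fintype.exists_ne_map_eq_of_card_lt classIdx (by simpa using h)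
  exact ⟨_, List.getElem_mem _, x, hclassIdx x, y, hidx ▸ hclassIdx y, hxy⟩

theorem image_swap_of_mem_class [DecidableEq Ω] (P : OrderedPartition Ω m)
    {s t : Set Ω} {x y : Ω} (hs : s ∈ P.classes) (hx : x ∈ s) (hy : y ∈ s)
    (ht : t ∈ P.classes) : swap x y '' t = t := by
  by_cases hst : s = t
  · subst hst
    refine Set.image_perm fun z hz => ?_
    obtain ⟨-, rfl | rfl⟩ := swap_apply_ne_self_iff.mp hz <;> assumption
  · have hdisj : Disjoint s t := P.pairwise_disjoint.forall hs ht hst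
    calc swap x y '' t = id '' t := Set.image_congr fun z hz =>
          swap_apply_of_ne_of_ne (hdisj.ne_of_mem hx hz).symm (hdisj.ne_of_mem hy hz).symm
      _ = t := Set.image_id t

theorem swap_smul_eq_of_mem_class [DecidableEq Ω] (P : OrderedPartition Ω m)
    {s : Set Ω} {x y : Ω} (hs : s ∈ P.classes) (hx : x ∈ s) (hy : y ∈ s) :
    swap x y • P = P :=
  ext' <| (List.map_congr_left fun _ ht => P.image_swap_of_mem_class hs hx hy ht).trans
    (List.map_id _)

noncomputable def singletons [Fintype Ω] (h : Fintype.card Ω ≤ m) : OrderedPartition Ω m where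
  classes := Finset.univ.toList.map fun x => ({x} : Set Ω)
  length_le := by simpa using h
  nonempty := by
    rintro s hs
    obtain ⟨x, -, rfl⟩ := List.mem_map.mp hs
    exact Set.singleton_nonempty x
  pairwise_disjoint :=
    .map _ (fun _ _ hne => Set.disjoint_singleton.mpr hne) Finset.univ.nodup_toList
  covers x := ⟨{x}, List.mem_map.mpr ⟨x, by simp, rfl⟩, rfl⟩

theorem smul_singletons_injective [Fintype Ω] (h : Fintype.card Ω ≤ m) :
    Function.Injective fun σ : Perm Ω => σ • singletons h := by
  intro g σ hgσ
  have hclasses := congrArg classes hgσ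
  simp only [smul_classes, singletons, List.map_map, Function.comp_def,
    Set.image_singleton] at hclasses
  exact Equiv.ext fun x => Set.singleton_eq_singleton_iff.mp
    (List.map_inj_left.mp hclasses x (by simp))

end OrderedPartition

theorem le_partClosure {Ω : Type*} (m : ℕ) (G : Subgroup (Perm Ω)) : G ≤ partClosure m G :=
  le_sSup fun _ => rfl

theorem partClosure_alternatingGroup_of_lt_card {Ω : Type*} [Fintype Ω] [DecidableEq Ω]
    {m : ℕ} (hm : m < Fintype.card Ω) : partClosure m (alternatingGroup Ω) = ⊤ := by
  refine top_le_iff.mp (le_sSup fun P => ?_)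
  obtain ⟨s, hs, x, hx, y, hy, hxy⟩ :=
    P.exists_ne_mem_of_length_lt_card (P.length_le.trans_lt hm)
  exact (orbit_alternatingGroup_eq_orbit_top hxy (P.swap_smul_eq_of_mem_class hs hx hy)).symm

theorem partClosure_eq_self_of_card_le {Ω : Type*} [Fintype Ω] {m : ℕ}
    (G : Subgroup (Perm Ω)) (hm : Fintype.card Ω ≤ m) : partClosure m G = G := by
  refine le_antisymm (sSup_le fun H hH σ hσ => ?_) (le_partClosure m G)
  obtain ⟨⟨g, hg⟩, hgσ⟩ : σ • OrderedPartition.singletons hm ∈ orbit G _ := by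
    rw [← hH]
    exact ⟨⟨σ, hσ⟩, rfl⟩
  exact OrderedPartition.smul_singletons_injective hm hgσ ▸ hg

/-- For `n ≥ 3` and `G = Alt(n)`: `G^[m] = Sym(n)` if `m ≤ n - 1`, and `G^[m] = G`
if `m ≥ n`. -/
theorem partClosure_alternatingGroup {n : ℕ} (hn : 3 ≤ n) (m : ℕ) :
    (m ≤ n - 1 → partClosure m (alternatingGroup (Fin n)) = ⊤) ∧
    (n ≤ m → partClosure m (alternatingGroup (Fin n)) = alternatingGroup (Fin n)) := by
  refine ⟨fun hm => partClosure_alternatingGroup_of_lt_card ?_,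
    fun hm => partClosure_eq_self_of_card_le _ (by simpa using hm)⟩
  rw [Fintype.card_fin]
  omega
end

section
/- Let Γ be a finite set, K ≤ Sym(Γ), Δ = {1,…,d}, Ω = Γ^d, and m a positive integer. Let k = min{k_m, d}, where k_m is the number of orbits of K in its componentwise action on Γ^m. Then the mapping Ω^m → Δ^[k], α ↦ Π(α), is well defined (i.e., Π(α) is an ordered partition of Δ into at most k nonempty classes for every α ∈ Ω^m) and surjective. -/
open Equiv MulAction Pointwise

/-! `Π(α)` is the list, in increasing order of value, of the nonempty fibres of the row map
`i ↦ sIdx α[i] : Δ → Fin a`, so it is an ordered partition with at most `min a d` classes.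
Conversely, an ordered partition `P` with `r ≤ min a d` classes is the fibre list of
`i ↦ (index of the class of i) : Δ → Fin r ⊆ Fin a`, and since `sIdx` is surjective this map
is the row map of the `α` whose `i`-th row is a preimage under `sIdx` of its value at `i`. -/

section FiberClasses

variable {ι β : Type*} [Fintype ι] [LinearOrder β]

def fiberClasses (f : ι → β) : List (Set ι) :=
  ((Finset.univ.image f).sort (· ≤ ·)).map fun t => f ⁻¹' {t}

theorem length_fiberClasses_le [Fintype β] (f : ι → β) :
    (fiberClasses f).length ≤ min (Fintype.card β) (Fintype.card ι) := by
  rw [fiberClasses, List.length_map, Finset.length_sort]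
  exact le_min (Finset.card_le_univ _) Finset.card_image_le

theorem mem_fiberClasses {f : ι → β} {s : Set ι} :
    s ∈ fiberClasses f ↔ ∃ i, f ⁻¹' {f i} = s := by
  simp [fiberClasses]

theorem pairwise_disjoint_fiberClasses (f : ι → β) : (fiberClasses f).Pairwise Disjoint :=
  ((Finset.sort_nodup _ _).pairwise_of_forall_ne fun _ _ _ _ => id).map _
    fun _ _ hne => Set.disjoint_singleton.mpr hne |>.preimage f

theorem fiberClasses_comp_of_surjective {γ : Type*} [LinearOrder γ] {r : ℕ} {f : ι → Fin r}
    (hf : Function.Surjective f) {e : Fin r → γ} (he : StrictMono e) :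
    fiberClasses (e ∘ f) = List.ofFn fun ℓ => f ⁻¹' {ℓ} := by
  have himage : Finset.univ.image (e ∘ f) = Finset.univ.map ⟨e, he.injective⟩ := by
    rw [← Finset.image_image, Finset.image_univ_of_surjective hf, Finset.map_eq_image]
    rfl
  rw [fiberClasses, himage, ← (he.strictMonoOn _).map_finsetSort, Fin.sort_univ, List.map_map,
    List.ofFn_eq_map]
  congr 1
  ext ℓ i
  simp [he.injective.eq_iff]

end FiberClasses

theorem piClasses_eq_fiberClasses {Γ : Type*} {d m a : ℕ} (sIdx : (Fin m → Γ) → Fin a)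
    (α : Fin m → Fin d → Γ) : piClasses sIdx α = fiberClasses fun i => sIdx fun j => α j i :=
  rfl

namespace OrderedPartition

variable {Ω : Type*} {m : ℕ} (P : OrderedPartition Ω m)

theorem exists_mem_get (x : Ω) : ∃ ℓ : Fin P.classes.length, x ∈ P.classes.get ℓ := by
  obtain ⟨s, hs, hx⟩ := P.covers x
  obtain ⟨ℓ, rfl⟩ := List.mem_iff_get.mp hs
  exact ⟨ℓ, hx⟩

noncomputable def classIndex (x : Ω) : Fin P.classes.length :=
  (P.exists_mem_get x).choose

theorem disjoint_get_of_ne {ℓ ℓ' : Fin P.classes.length} (h : ℓ ≠ ℓ') :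
    Disjoint (P.classes.get ℓ) (P.classes.get ℓ') := by
  rcases h.lt_or_gt with h | h
  · exact List.pairwise_iff_get.mp P.pairwise_disjoint _ _ h
  · exact (List.pairwise_iff_get.mp P.pairwise_disjoint _ _ h).symm

theorem classIndex_eq_iff {x : Ω} {ℓ : Fin P.classes.length} :
    P.classIndex x = ℓ ↔ x ∈ P.classes.get ℓ := by
  have hx : x ∈ P.classes.get (P.classIndex x) := (P.exists_mem_get x).choose_spec
  refine ⟨fun h => h ▸ hx, fun h => ?_⟩
  by_contra hne
  exact (P.disjoint_get_of_ne hne).notMem_of_mem_left hx h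

theorem ofFn_preimage_classIndex : (List.ofFn fun ℓ => P.classIndex ⁻¹' {ℓ}) = P.classes := by
  conv_rhs => rw [← List.ofFn_get P.classes]
  congr 1
  ext ℓ x
  exact P.classIndex_eq_iff

theorem classIndex_surjective : Function.Surjective P.classIndex := fun ℓ =>
  (P.nonempty _ (List.get_mem _ ℓ)).imp fun _ => P.classIndex_eq_iff.mpr

theorem fiberClasses_comp_classIndex [Fintype Ω] {γ : Type*} [LinearOrder γ]
    {e : Fin P.classes.length → γ} (he : StrictMono e) :
    fiberClasses (e ∘ P.classIndex) = P.classes := by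
  rw [fiberClasses_comp_of_surjective P.classIndex_surjective he, ofFn_preimage_classIndex]

end OrderedPartition

theorem piClasses_wellDefined_and_surjective_general {Γ : Type*} {d m a : ℕ}
    (sIdx : (Fin m → Γ) → Fin a)
    (hsurj : Function.Surjective sIdx) :
    (∀ α : Fin m → (Fin d → Γ),
        (piClasses sIdx α).length ≤ min a d ∧
        (∀ s ∈ piClasses sIdx α, s.Nonempty) ∧
        (piClasses sIdx α).Pairwise Disjoint ∧
        (∀ i : Fin d, ∃ s ∈ piClasses sIdx α, i ∈ s)) ∧
    (∀ P : OrderedPartition (Fin d) (min a d),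
        ∃ α : Fin m → (Fin d → Γ), piClasses sIdx α = P.classes) := by
  simp only [piClasses_eq_fiberClasses]
  refine ⟨fun α => ⟨?_, ?_, pairwise_disjoint_fiberClasses _, ?_⟩, fun P => ?_⟩
  · simpa using length_fiberClasses_le fun i => sIdx fun j => α j i
  · intro s hs
    obtain ⟨i, rfl⟩ := mem_fiberClasses.mp hs
    exact ⟨i, rfl⟩
  · exact fun i => ⟨_, mem_fiberClasses.mpr ⟨i, rfl⟩, rfl⟩
  · have hle : P.classes.length ≤ a := P.length_le.trans (min_le_left _ _)
    let α : Fin m → Fin d → Γ := fun j i =>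
      Function.surjInv hsurj (Fin.castLE hle (P.classIndex i)) j
    have hrows : (fun i => sIdx fun j => α j i) = Fin.castLE hle ∘ P.classIndex :=
      funext fun i => Function.surjInv_eq hsurj _
    exact ⟨α, (congrArg fiberClasses hrows).trans
      (P.fiberClasses_comp_classIndex (Fin.strictMono_castLE hle))⟩

/-- **Lemma.** Given an enumeration `sIdx : Γ^m → Fin a` of the orbits of `K` on `Γ^m`
(fibers of `sIdx` are exactly the orbits, and it is surjective so `a = k_m`), the mapping
`Ω^m → Δ^[k]`, `α ↦ Π(α)`, where `k = min{k_m, d}`, is well defined (each `Π(α)` is an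
ordered partition of `Δ = Fin d` into at most `k` nonempty classes) and surjective. -/
theorem piClasses_wellDefined_and_surjective {Γ : Type*} [Fintype Γ] {d m a : ℕ}
    (K : Subgroup (Equiv.Perm Γ)) (hm : 1 ≤ m)
    (sIdx : (Fin m → Γ) → Fin a)
    (horb : ∀ β γ : Fin m → Γ, sIdx β = sIdx γ ↔ ∃ g ∈ K, ∀ j, g (β j) = γ j)
    (hsurj : Function.Surjective sIdx) :
    (∀ α : Fin m → (Fin d → Γ),
        (piClasses sIdx α).length ≤ min a d ∧
        (∀ s ∈ piClasses sIdx α, s.Nonempty) ∧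
        (piClasses sIdx α).Pairwise Disjoint ∧
        (∀ i : Fin d, ∃ s ∈ piClasses sIdx α, i ∈ s)) ∧
    (∀ P : OrderedPartition (Fin d) (min a d),
        ∃ α : Fin m → (Fin d → Γ), piClasses sIdx α = P.classes) :=
  piClasses_wellDefined_and_surjective_general sIdx hsurj
end
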